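/- For all elements P, Q of a commutative ring and all nonnegative integers n, m, V_{nm}(P, Q) = V_n(V_m(P, Q), Q^m). -/
import Mathlib


def lucasVR {R : Type*} [CommRing R] (P Q : R) : ℕ → R
  | 0 => 2
  | 1 => P
  | n + 2 => P * lucasVR P Q (n + 1) - Q * lucasVR P Q n

private def lucasUR {R : Type*} [CommRing R] (P Q : R) : ℕ → R
  | 0 => 0
  | 1 => 1
  | n + 2 => P * lucasUR P Q (n + 1) - Q * lucasUR P Q n

section Aux

variable {R : Type*} [CommRing R] (P Q : R)

private lemma addW (W : ℕ → R) (hW : ∀ k, W (k + 2) = P * W (k + 1) - Q * W k) :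
    ∀ m k, W (k + m + 1) = lucasUR P Q (m + 1) * W (k + 1) - Q * lucasUR P Q m * W k := by
  intro m
  induction m using Nat.strong_induction_on with
  | _ m ih =>
    match m with
    | 0 => intro k; simp [lucasUR]
    | 1 => intro k; simp only [lucasUR]; linear_combination hW k
    | (m + 2) =>
      intro k
      have h1 := ih (m + 1) (by omega) k
      have h0 := ih m (by omega) k
      have : k + (m + 2) + 1 = (k + m + 1) + 2 := by omega
      rw [this, hW (k + m + 1), show k + m + 1 + 1 = k + (m + 1) + 1 by omega, h1, h0]
      show _ = lucasUR P Q (m + 3) * W (k + 1) - Q * lucasUR P Q (m + 2) * W k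
      rw [show lucasUR P Q (m + 3) = P * lucasUR P Q (m + 2) - Q * lucasUR P Q (m + 1) from rfl,
        show lucasUR P Q (m + 2) = P * lucasUR P Q (m + 1) - Q * lucasUR P Q m from rfl]
      ring

private lemma VU : ∀ n, lucasVR P Q (n + 1) = lucasUR P Q (n + 2) - Q * lucasUR P Q n := by
  intro n
  induction n using Nat.strong_induction_on with
  | _ n ih =>
    match n with
    | 0 => simp [lucasVR, lucasUR]
    | 1 => simp [lucasVR, lucasUR]; ring
    | (n + 2) =>
      have h1 := ih (n + 1) (by omega)
      have h0 := ih n (by omega)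
      show P * lucasVR P Q (n + 2) - Q * lucasVR P Q (n + 1) = _
      rw [h1, h0,
        show lucasUR P Q (n + 4) = P * lucasUR P Q (n + 3) - Q * lucasUR P Q (n + 2) from rfl,
        show lucasUR P Q (n + 2) = P * lucasUR P Q (n + 1) - Q * lucasUR P Q n from rfl]
      ring

private lemma cassini : ∀ m, lucasUR P Q (m + 1) ^ 2 =
    lucasUR P Q (m + 2) * lucasUR P Q m + Q ^ m := by
  intro m
  induction m with
  | zero => simp [lucasUR]
  | succ m ih =>
    rw [show lucasUR P Q (m + 3) = P * lucasUR P Q (m + 2) - Q * lucasUR P Q (m + 1) from rfl,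
      show lucasUR P Q (m + 2) = P * lucasUR P Q (m + 1) - Q * lucasUR P Q m from rfl] at *
    rw [pow_succ]
    linear_combination Q * ih

private lemma doubleU (m : ℕ) :
    lucasUR P Q (2 * m + 2) = lucasUR P Q (m + 1) * lucasVR P Q (m + 1) := by
  have h := addW P Q (lucasUR P Q) (fun k => rfl) m (m + 1)
  rw [show 2 * m + 2 = m + 1 + m + 1 by omega, h, VU P Q m]
  ring

private lemma oddU (m : ℕ) :
    lucasUR P Q (2 * m + 1) = lucasVR P Q (m + 1) * lucasUR P Q m + Q ^ m := by
  have h := addW P Q (lucasUR P Q) (fun k => rfl) m m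
  rw [show 2 * m + 1 = m + m + 1 by omega, h, VU P Q m]
  linear_combination cassini P Q m

private lemma stepV (a m : ℕ) : lucasVR P Q (a + 2 * m) =
    lucasVR P Q m * lucasVR P Q (a + m) - Q ^ m * lucasVR P Q a := by
  cases m with
  | zero => simp [lucasVR]; ring
  | succ m =>
    have hV := addW P Q (lucasVR P Q) (fun k => rfl)
    have h1 : lucasVR P Q (a + 2 * (m + 1)) =
        lucasUR P Q (2 * m + 2) * lucasVR P Q (a + 1) -
          Q * lucasUR P Q (2 * m + 1) * lucasVR P Q a := by
      have := hV (2 * m + 1) a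
      rw [show a + (2 * m + 1) + 1 = a + 2 * (m + 1) by omega] at this
      exact this
    have h2 : lucasVR P Q (a + (m + 1)) =
        lucasUR P Q (m + 1) * lucasVR P Q (a + 1) - Q * lucasUR P Q m * lucasVR P Q a := by
      have := hV m a
      rw [show a + m + 1 = a + (m + 1) by omega] at this
      exact this
    rw [h1, h2, doubleU, oddU, pow_succ]
    ring

end Aux

theorem lucasVR_mul (R : Type*) [CommRing R] (P Q : R) (n m : ℕ) :
    lucasVR P Q (n * m) = lucasVR (lucasVR P Q m) (Q ^ m) n := by
  induction n using Nat.strong_induction_on with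
  | _ n ih =>
    match n with
    | 0 => simp [lucasVR]
    | 1 => simp [lucasVR]
    | (n + 2) =>
      have h1 := ih (n + 1) (by omega)
      have h0 := ih n (by omega)
      rw [show (n + 2) * m = n * m + 2 * m by ring, stepV,
        show n * m + m = (n + 1) * m by ring, h1, h0]
      rfl
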